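/- arXiv:2402.09915 — 3 statements merged into one kernel-verified Lean document; each statement's English description precedes it below -/
import Mathlib

section
/- Let 0 < h < 1/4 and let τ_h be the trapezoid function on T = R/Z vanishing outside (-2h,2h), equal to 1 on [-h,h], and linear on [-2h,-h] and [h,2h]. Then τ̂_h(0) = 3h and for every 1 ≤ p < ∞, (∑_{n∈Z} |τ̂_h(n)|^p)^{1/p} ≤ 3 h^{(p-1)/p}. -/
open MeasureTheory

/-- The `n`-th Fourier coefficient of a 1-periodic function `f : ℝ → ℂ`,
`f̂(n) = ∫₀¹ f(t) e^{-2πint} dt`. -/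
noncomputable def fourierCoefP (f : ℝ → ℂ) (n : ℤ) : ℂ :=
  ∫ t in (0:ℝ)..1, f t * Complex.exp ((-2) * (Real.pi : ℂ) * Complex.I * (n : ℂ) * (t : ℂ))

/-!
On `[-1/2, 1/2]` the trapezoid is `τ_h = Δ_h(· + h) + Δ_h + Δ_h(· - h)`, where
`Δ_h t = max 0 (1 - |t| / h)` has Fourier transform `Δ̂_h(w) = h sinc² (π w h) ≥ 0`.
Hence `τ̂_h(n) = Δ̂_h(n) (1 + 2 cos (2π n h))`, so `τ̂_h(0) = 3h` and `|τ̂_h(n)| ≤ 3 Δ̂_h(n)`.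
Since `0 ≤ Δ̂_h ≤ h` and `∑ₙ Δ̂_h(n) = Δ_h(0) = 1`, we get `∑ₙ Δ̂_h(n)^p ≤ h^(p-1)`.
-/

open Real Set
open Complex (I)
open scoped Complex

theorem rpow_le_rpow_sub_one_mul {x M p : ℝ} (hx : 0 ≤ x) (hxM : x ≤ M) (hp : 1 ≤ p) :
    x ^ p ≤ M ^ (p - 1) * x := by
  calc x ^ p = x ^ (p - 1) * x ^ (1 : ℝ) := by
        rw [← rpow_add' hx (by linarith), sub_add_cancel]
    _ ≤ M ^ (p - 1) * x := by
        rw [rpow_one]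
        gcongr

theorem tsum_norm_rpow_rpow_one_div_le {ι E : Type*} [NormedAddCommGroup E] {a : ι → E}
    {b : ι → ℝ} {C M p : ℝ} (hC : 0 ≤ C) (hp : 1 ≤ p) (hab : ∀ i, ‖a i‖ ≤ C * b i)
    (hb0 : ∀ i, 0 ≤ b i) (hbM : ∀ i, b i ≤ M) (hb : HasSum b 1) :
    (∑' i, ‖a i‖ ^ p) ^ (1 / p) ≤ C * M ^ ((p - 1) / p) := by
  have hp0 : 0 < p := by linarith
  have hM : 0 ≤ M := by
    obtain ⟨i⟩ : Nonempty ι := by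
      by_contra hι
      rw [not_nonempty_iff] at hι
      exact one_ne_zero (hb.unique hasSum_empty)
    exact (hb0 i).trans (hbM i)
  have hterm : ∀ i, ‖a i‖ ^ p ≤ C ^ p * M ^ (p - 1) * b i := fun i => by
    calc ‖a i‖ ^ p ≤ (C * b i) ^ p := by gcongr; exact hab i
      _ = C ^ p * b i ^ p := mul_rpow hC (hb0 i)
      _ ≤ C ^ p * (M ^ (p - 1) * b i) := by
          gcongr; exact rpow_le_rpow_sub_one_mul (hb0 i) (hbM i) hp
      _ = C ^ p * M ^ (p - 1) * b i := by ring
  have hsum : ∑' i, ‖a i‖ ^ p ≤ C ^ p * M ^ (p - 1) := by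
    have hdom := hb.summable.mul_left (C ^ p * M ^ (p - 1))
    calc ∑' i, ‖a i‖ ^ p ≤ ∑' i, C ^ p * M ^ (p - 1) * b i :=
          (hdom.of_nonneg_of_le (fun i => by positivity) hterm).tsum_le_tsum hterm hdom
      _ = C ^ p * M ^ (p - 1) := by rw [tsum_mul_left, hb.tsum_eq, mul_one]
  calc (∑' i, ‖a i‖ ^ p) ^ (1 / p) ≤ (C ^ p * M ^ (p - 1)) ^ (1 / p) := by
        gcongr
    _ = C * M ^ ((p - 1) / p) := by
        rw [mul_rpow (by positivity) (by positivity), ← rpow_mul hC, ← rpow_mul hM,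
          mul_one_div_cancel hp0.ne', rpow_one, mul_one_div]

theorem mul_sinc_sq_eq {h w : ℝ} (hh : h ≠ 0) (hw : w ≠ 0) :
    h * sinc (π * w * h) ^ 2 = (1 - cos (2 * π * w * h)) / (2 * π ^ 2 * w ^ 2 * h) := by
  have hx : π * w * h ≠ 0 := by simp [hw, hh, pi_ne_zero]
  rw [sinc_of_ne_zero hx, show 2 * π * w * h = 2 * (π * w * h) by ring, cos_two_mul, cos_sq']
  field_simp
  ring

theorem cosh_neg_two_pi_I_mul (w x : ℝ) :
    Complex.cosh ((-2) * π * I * w * x) = cos (2 * π * w * x) := by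
  rw [show (-2) * π * I * w * x = ((-(2 * π * w * x)) : ℝ) * I by push_cast; ring,
    Complex.cosh_mul_I, ← Complex.ofReal_cos, cos_neg]

theorem integral_linear_mul_cexp (a b : ℂ) {c : ℂ} (hc : c ≠ 0) (x y : ℝ) :
    ∫ t in x..y, (a + b * t) * cexp (c * t) =
      ((a + b * y) / c - b / c ^ 2) * cexp (c * y) -
        ((a + b * x) / c - b / c ^ 2) * cexp (c * x) := by
  have hderiv : ∀ z : ℝ, HasDerivAt (fun t : ℝ => ((a + b * t) / c - b / c ^ 2) * cexp (c * t))
      ((a + b * z) * cexp (c * z)) z := by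
    intro z
    have hlin : HasDerivAt (fun w : ℂ => (a + b * w) / c - b / c ^ 2) (b / c) z := by
      simpa using ((((hasDerivAt_id (z : ℂ)).const_mul b).const_add a).div_const c).sub_const
        (b / c ^ 2)
    have hexp : HasDerivAt (fun w : ℂ => cexp (c * w)) (cexp (c * z) * c) z := by
      simpa using ((hasDerivAt_id (z : ℂ)).const_mul c).cexp
    convert (hlin.mul hexp).comp_ofReal using 1
    · rfl
    field_simp
    ring
  exact intervalIntegral.integral_eq_sub_of_hasDerivAt (fun t _ => hderiv t)
    ((by fun_prop : Continuous _).intervalIntegrable _ _)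

theorem integral_comp_add_right_mul_cexp (g : ℝ → ℂ) (c : ℂ) (a : ℝ) :
    ∫ t, g (t + a) * cexp (c * t) = cexp (-(c * a)) * ∫ t, g t * cexp (c * t) := by
  rw [← integral_const_mul,
    ← integral_add_right_eq_self (fun t => cexp (-(c * a)) * (g t * cexp (c * t))) a]
  congr 1 with t
  rw [mul_left_comm, ← Complex.exp_add, Complex.ofReal_add]
  ring_nf

theorem fourierCoefP_eq_integral {f g : ℝ → ℂ} (hf : Function.Periodic f 1)
    (hfg : EqOn f g (Icc (-(1 / 2)) (1 / 2))) (hg : Function.support g ⊆ Ioc (-(1 / 2)) (1 / 2))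
    (n : ℤ) : fourierCoefP f n = ∫ t, g t * cexp ((-2) * π * I * n * t) := by
  set c : ℂ := (-2) * π * I * n
  have hc : cexp c = 1 := by
    rw [show c = (-n : ℤ) * (2 * π * I) by push_cast; ring]
    exact Complex.exp_int_mul_two_pi_mul_I (-n)
  have hper : Function.Periodic (fun t => f t * cexp (c * t)) 1 := fun t => by
    simp only [hf t, Complex.ofReal_add, Complex.ofReal_one, mul_add, mul_one, Complex.exp_add, hc]
  calc fourierCoefP f n = ∫ t in -(1 / 2)..1 / 2, f t * cexp (c * t) := by
        have := hper.intervalIntegral_add_eq 0 (-(1 / 2))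
        rwa [zero_add, show -(1 / 2 : ℝ) + 1 = 1 / 2 by norm_num] at this
    _ = ∫ t in -(1 / 2)..1 / 2, g t * cexp (c * t) :=
        intervalIntegral.integral_congr fun t ht => by
          rw [hfg (by rwa [uIcc_of_le (by norm_num)] at ht)]
    _ = ∫ t, g t * cexp (c * t) :=
        intervalIntegral.integral_eq_integral_of_support_subset
          ((Function.support_mul_subset_left _ _).trans hg)

noncomputable def triangle (h t : ℝ) : ℝ := max 0 (1 - |t| / h)

section Triangle

variable {h : ℝ}

@[fun_prop]
theorem continuous_triangle (h : ℝ) : Continuous (triangle h) := by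
  unfold triangle; fun_prop

theorem triangle_eq_max_zero_one_sub_abs_div (hh : 0 < h) (t : ℝ) :
    triangle h t = max 0 (1 - |t / h|) := by
  rw [triangle, abs_div, abs_of_pos hh]

theorem support_triangle_subset (hh : 0 < h) : Function.support (triangle h) ⊆ Ioo (-h) h := by
  intro t ht
  rw [mem_Ioo, ← abs_lt]
  by_contra hth
  apply ht
  rw [triangle, max_eq_left]
  rw [sub_nonpos, le_div_iff₀ hh, one_mul]
  exact not_lt.mp hth

theorem min_one_max_zero_two_sub_eq_triangle_add (hh : 0 < h) (t : ℝ) :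
    min 1 (max 0 (2 - |t| / h)) = triangle h (t + h) + triangle h t + triangle h (t - h) := by
  have habs : |t| / h = |t / h| := by rw [abs_div, abs_of_pos hh]
  simp only [triangle_eq_max_zero_one_sub_abs_div hh, add_div, sub_div, div_self hh.ne', habs]
  generalize t / h = u
  grind

theorem support_min_one_max_zero_two_sub_subset (hh : 0 < h) :
    Function.support (fun t => min 1 (max 0 (2 - |t| / h))) ⊆ Ioo (-(2 * h)) (2 * h) := by
  intro t ht
  rw [mem_Ioo, ← abs_lt]
  by_contra hth
  apply ht
  dsimp only
  rw [max_eq_left, min_eq_right zero_le_one]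
  rw [sub_nonpos, le_div_iff₀ hh]
  exact not_lt.mp hth

theorem integrable_triangle_comp_add_right_mul_cexp (hh : 0 < h) (a : ℝ) (c : ℂ) :
    Integrable (fun t => (triangle h (t + a) : ℂ) * cexp (c * t)) := by
  refine (by fun_prop : Continuous _).integrable_of_hasCompactSupport
    (HasCompactSupport.intro (isCompact_Icc (a := -h - a) (b := h - a)) fun t ht => ?_)
  have hta : t + a ∉ Function.support (triangle h) := fun hs => ht <| by
    have := support_triangle_subset hh hs
    constructor <;> linarith [this.1, this.2]
  rw [Function.notMem_support.mp hta, Complex.ofReal_zero, zero_mul]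

theorem integral_triangle_mul (hh : 0 < h) {g : ℝ → ℂ} (hg : Continuous g) :
    ∫ t, (triangle h t : ℂ) * g t =
      (∫ t in -h..0, (1 + t / h) * g t) + ∫ t in 0..h, (1 - t / h) * g t := by
  have hint : ∀ a b, IntervalIntegrable (fun t => (triangle h t : ℂ) * g t) volume a b :=
    fun a b => (by fun_prop : Continuous _).intervalIntegrable a b
  have hleft : EqOn (fun t => (triangle h t : ℂ) * g t) (fun t => (1 + t / h) * g t)
      (uIcc (-h) 0) := by
    intro t ht
    rw [uIcc_of_le (by linarith)] at ht
    have : triangle h t = 1 + t / h := by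
      rw [triangle, abs_of_nonpos ht.2, max_eq_right]
      · ring
      · rw [sub_nonneg, div_le_one hh]; linarith [ht.1]
    simp [this]
  have hright : EqOn (fun t => (triangle h t : ℂ) * g t) (fun t => (1 - t / h) * g t)
      (uIcc 0 h) := by
    intro t ht
    rw [uIcc_of_le hh.le] at ht
    have : triangle h t = 1 - t / h := by
      rw [triangle, abs_of_nonneg ht.1, max_eq_right]
      rw [sub_nonneg, div_le_one hh]; exact ht.2
    simp [this]
  rw [← intervalIntegral.integral_eq_integral_of_support_subset,
    ← intervalIntegral.integral_add_adjacent_intervals (hint _ 0) (hint 0 _),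
    intervalIntegral.integral_congr hleft, intervalIntegral.integral_congr hright]
  exact (Function.support_mul_subset_left _ _).trans <|
    (Function.support_comp_subset Complex.ofReal_zero _).trans <|
      (support_triangle_subset hh).trans Ioo_subset_Ioc_self

theorem integral_triangle (hh : 0 < h) : ∫ t, (triangle h t : ℂ) = h := by
  have hh' : (h : ℂ) ≠ 0 := Complex.ofReal_ne_zero.mpr hh.ne'
  have hid : ∀ a b : ℝ, IntervalIntegrable (fun t : ℝ => (t : ℂ) / h) volume a b :=
    fun a b => (by fun_prop : Continuous _).intervalIntegrable a b
  have hid' : ∀ a b : ℝ, ∫ t in a..b, (t : ℂ) = ((b ^ 2 - a ^ 2) / 2 : ℝ) := fun a b => by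
    rw [intervalIntegral.integral_ofReal, integral_id]
  have hsplit := integral_triangle_mul hh (g := fun _ => 1) continuous_const
  simp only [mul_one, intervalIntegral.integral_add intervalIntegrable_const (hid _ _),
    intervalIntegral.integral_sub intervalIntegrable_const (hid _ _),
    intervalIntegral.integral_div, hid', intervalIntegral.integral_const] at hsplit
  rw [hsplit]
  simp only [Complex.real_smul, mul_one]
  push_cast
  field_simp
  ring

theorem integral_triangle_mul_cexp (hh : 0 < h) {c : ℂ} (hc : c ≠ 0) :
    ∫ t, (triangle h t : ℂ) * cexp (c * t) = 2 * (Complex.cosh (c * h) - 1) / (h * c ^ 2) := by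
  have hh' : (h : ℂ) ≠ 0 := Complex.ofReal_ne_zero.mpr hh.ne'
  rw [integral_triangle_mul hh (by fun_prop)]
  simp_rw [div_eq_inv_mul, sub_eq_add_neg, ← neg_mul, integral_linear_mul_cexp _ _ hc]
  rw [Complex.cosh, Complex.ofReal_neg, Complex.ofReal_zero]
  simp only [mul_zero, Complex.exp_zero, mul_neg]
  field_simp
  ring

theorem integral_triangle_mul_cexp_neg_two_pi_I (hh : 0 < h) (w : ℝ) :
    ∫ t, (triangle h t : ℂ) * cexp ((-2) * π * I * w * t) =
      ((h * sinc (π * w * h) ^ 2 : ℝ) : ℂ) := by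
  rcases eq_or_ne w 0 with rfl | hw
  · simp [integral_triangle hh]
  have hc : (-2) * π * I * w ≠ 0 := by simp [hw, pi_ne_zero]
  rw [integral_triangle_mul_cexp hh hc, cosh_neg_two_pi_I_mul, mul_sinc_sq_eq hh.ne' hw]
  push_cast
  field_simp
  rw [Complex.I_sq]
  ring

end Triangle

/-- Fourier inversion `∑ₙ Δ̂_h(n) = Δ_h(0)`, obtained from the Bernoulli-polynomial series
`∑_{n ≥ 1} cos (2π n x) / n² = π² B₂(x)` on `[0, 1]`. -/
theorem hasSum_mul_sinc_sq {h : ℝ} (hh0 : 0 < h) (hh1 : h ≤ 1) :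
    HasSum (fun n : ℤ => h * sinc (π * n * h) ^ 2) 1 := by
  have hcos := hasSum_one_div_nat_pow_mul_cos one_ne_zero ⟨hh0.le, hh1⟩
  simp only [mul_one] at hcos
  rw [← bernoulliFun, bernoulliFun_two] at hcos
  have hnat := (hasSum_zeta_two.sub hcos).div_const (2 * π ^ 2 * h)
  have hterm : ∀ n : ℕ, h * sinc (π * (n + 1 : ℕ) * h) ^ 2 =
      (1 / ((n + 1 : ℕ) : ℝ) ^ 2 - 1 / ((n + 1 : ℕ) : ℝ) ^ 2 * cos (2 * π * (n + 1 : ℕ) * h)) /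
        (2 * π ^ 2 * h) := fun n => by
    rw [mul_sinc_sq_eq hh0.ne' (by positivity)]
    field_simp
  have hpos : HasSum (fun n : ℕ => h * sinc (π * (n + 1 : ℕ) * h) ^ 2) ((1 - h) / 2) := by
    rw [funext hterm]
    convert (hasSum_nat_add_iff' 1).mpr hnat using 1
    · rfl
    norm_num [Nat.factorial]
    field_simp
    ring
  have hneg : HasSum (fun n : ℕ => h * sinc (π * (-(n + 1 : ℕ) : ℤ) * h) ^ 2) ((1 - h) / 2) := by
    convert hpos using 3 with n
    rw [Int.cast_neg, mul_neg, neg_mul, sinc_neg, Int.cast_natCast]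
  convert HasSum.of_add_one_of_neg_add_one (f := fun n : ℤ => h * sinc (π * n * h) ^ 2)
    (by exact_mod_cast hpos) (by exact_mod_cast hneg) using 1
  rw [Int.cast_zero, mul_zero, zero_mul, sinc_zero]
  ring

theorem fourierCoefP_trapezoid {h : ℝ} (hh0 : 0 < h) (hh1 : h ≤ 1 / 4) {τ : ℝ → ℝ}
    (hper : ∀ t, τ (t + 1) = τ t)
    (hdef : ∀ t ∈ Icc (-(1 / 2) : ℝ) (1 / 2), τ t = min 1 (max 0 (2 - |t| / h))) (n : ℤ) :
    fourierCoefP (fun t => (τ t : ℂ)) n =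
      ((h * sinc (π * n * h) ^ 2 * (1 + 2 * cos (2 * π * n * h)) : ℝ) : ℂ) := by
  have hsupp : Function.support (fun t => ((min 1 (max 0 (2 - |t| / h)) : ℝ) : ℂ)) ⊆
      Ioc (-(1 / 2)) (1 / 2) :=
    (Function.support_comp_subset Complex.ofReal_zero _).trans <|
      (support_min_one_max_zero_two_sub_subset hh0).trans <|
        Ioo_subset_Ioc_self.trans (Ioc_subset_Ioc (by linarith) (by linarith))
  rw [fourierCoefP_eq_integral (fun t => by simp only [hper]) (fun t ht => by simp only [hdef t ht])
    hsupp]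
  simp_rw [min_one_max_zero_two_sub_eq_triangle_add hh0, Complex.ofReal_add, add_mul,
    sub_eq_add_neg _ h]
  have hint := integrable_triangle_comp_add_right_mul_cexp hh0 (c := (-2) * π * I * n)
  have hint0 : Integrable (fun t => (triangle h t : ℂ) * cexp ((-2) * π * I * n * t)) := by
    simpa using hint 0
  rw [integral_add (by exact (hint h).add hint0) (hint (-h)), integral_add (hint h) hint0,
    integral_comp_add_right_mul_cexp (fun s => (triangle h s : ℂ)),
    integral_comp_add_right_mul_cexp (fun s => (triangle h s : ℂ))]
  have hΔ := integral_triangle_mul_cexp_neg_two_pi_I hh0 n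
  have hcosh := cosh_neg_two_pi_I_mul n h
  push_cast at hΔ
  rw [hΔ]
  rw [Complex.cosh] at hcosh
  simp only [Complex.ofReal_neg, mul_neg, neg_neg]
  push_cast at hcosh ⊢
  linear_combination (2 * (h * (sinc (π * n * h) : ℂ) ^ 2)) * hcosh

theorem abs_one_add_two_mul_cos_le (x : ℝ) : |1 + 2 * cos x| ≤ 3 := by
  rw [abs_le]
  constructor <;> linarith [neg_one_le_cos x, cos_le_one x]

/-- The trapezoid function `τ_h` (support `(-2h,2h)`, equal to 1 on `[-h,h]`, linear on
`[-2h,-h]` and `[h,2h]`) satisfies `τ̂_h(0) = 3h` and has `ℓ^p` norm of Fourier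
coefficients at most `3 h^{(p-1)/p}` for every `1 ≤ p < ∞`. -/
theorem stmt1 (h p : ℝ) (hh0 : 0 < h) (hh1 : h < 1/4) (hp : 1 ≤ p)
    (τ : ℝ → ℝ)
    (hper : ∀ t, τ (t + 1) = τ t)
    (hdef : ∀ t ∈ Set.Icc (-(1/2) : ℝ) (1/2), τ t = min 1 (max 0 (2 - |t| / h))) :
    fourierCoefP (fun t => (τ t : ℂ)) 0 = (3 * h : ℝ) ∧
    (∑' n : ℤ, ‖fourierCoefP (fun t => (τ t : ℂ)) n‖ ^ p) ^ (1/p) ≤ 3 * h ^ ((p - 1)/p) := by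
  have hcoef := fourierCoefP_trapezoid hh0 hh1.le hper hdef
  refine ⟨by rw [hcoef]; norm_num; ring, ?_⟩
  refine tsum_norm_rpow_rpow_one_div_le (b := fun n : ℤ => h * sinc (π * n * h) ^ 2) (by norm_num)
    hp (fun n => ?_) (fun n => by positivity) (fun n => ?_) (hasSum_mul_sinc_sq hh0 (by linarith))
  · rw [hcoef, Complex.norm_real, norm_mul, norm_of_nonneg (by positivity), mul_comm 3]
    exact mul_le_mul_of_nonneg_left (abs_one_add_two_mul_cos_le _) (by positivity)
  · exact mul_le_of_le_one_right hh0.le ((sq_le_one_iff_abs_le_one _).mpr (abs_sinc_le_one _))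
end

section
/- Let P_0, …, P_{N−1} be trigonometric polynomials on T with integer spectrum, and let ν be a positive integer with ν > 2·deg(P_j) for all 0 ≤ j ≤ N−1. Define P(t) := ∏_{j=0}^{N−1} P_j(ν^j t). Then P̂(0) = ∏_{j=0}^{N−1} P̂_j(0) and, for every 1 ≤ p < ∞, ‖P‖_{A^p(T)} = ∏_{j=0}^{N−1} ‖P_j‖_{A^p(T)}. -/
/-
Expanding the product, `P` is the exponential sum over `k ∈ ∏ⱼ [-dⱼ, dⱼ]` with coefficient
`∏ⱼ cⱼ(kⱼ)` at the frequency `∑ⱼ kⱼ νʲ`. Two such `k` differ digitwise by less than `ν` in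
absolute value, so they give the same frequency only if they are equal (reduce mod `ν` and
induct). Hence distinct `k` have distinct frequencies, `P̂` takes the values `∏ⱼ cⱼ(kⱼ)` exactly
once each and vanishes elsewhere, and both claims follow by distributing the product over sums.
-/

open MeasureTheory

open Finset

section FourierCoefficients

variable {ι : Type*}

theorem fourierCoefP_exp (m n : ℤ) :
    fourierCoefP (fun t => Complex.exp (2 * Real.pi * Complex.I * m * t)) n
      = if m = n then 1 else 0 := by
  have hmul : ∀ t : ℝ, Complex.exp (2 * Real.pi * Complex.I * m * t) *
      Complex.exp (-2 * Real.pi * Complex.I * n * t)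
        = Complex.exp (2 * Real.pi * Complex.I * ((m : ℂ) - n) * t) := by
    intro t
    rw [← Complex.exp_add]
    ring_nf
  simp only [fourierCoefP, hmul]
  split_ifs with h
  · simp [h]
  · have hc : 2 * Real.pi * Complex.I * ((m : ℂ) - n) ≠ 0 := by
      have hmn : (m : ℂ) - n ≠ 0 := sub_ne_zero.mpr (by exact_mod_cast h)
      have hπ : (Real.pi : ℂ) ≠ 0 := by exact_mod_cast Real.pi_ne_zero
      exact mul_ne_zero (mul_ne_zero (mul_ne_zero two_ne_zero hπ) Complex.I_ne_zero) hmn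
    have hper : Complex.exp (2 * Real.pi * Complex.I * ((m : ℂ) - n) * (1 : ℝ)) = 1 := by
      rw [← Complex.exp_int_mul_two_pi_mul_I (m - n)]
      push_cast
      ring_nf
    rw [integral_exp_mul_complex hc, hper]
    simp

theorem fourierCoefP_sum_exp (s : Finset ι) (a : ι → ℂ) (m : ι → ℤ) (n : ℤ) :
    fourierCoefP (fun t => ∑ i ∈ s, a i * Complex.exp (2 * Real.pi * Complex.I * m i * t)) n
      = ∑ i ∈ s with m i = n, a i := by
  have hterm : ∀ i ∈ s, (∫ t in (0 : ℝ)..1,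
      a i * Complex.exp (2 * Real.pi * Complex.I * m i * t) *
        Complex.exp (-2 * Real.pi * Complex.I * n * t)) = if m i = n then a i else 0 := by
    intro i _
    rw [show (if m i = n then a i else 0) = a i * fourierCoefP
        (fun t => Complex.exp (2 * Real.pi * Complex.I * m i * t)) n by simp [fourierCoefP_exp],
      fourierCoefP, ← intervalIntegral.integral_const_mul]
    simp only [mul_assoc]
  rw [fourierCoefP, sum_filter, ← sum_congr rfl hterm, ← intervalIntegral.integral_finsetSum]
  · simp only [sum_mul]
  · intro i _
    exact Continuous.intervalIntegrable (by fun_prop) _ _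

variable {s : Finset ι} {m : ι → ℤ}

theorem fourierCoefP_sum_exp_apply_of_injOn (a : ι → ℂ) (hm : Set.InjOn m s) {i : ι}
    (hi : i ∈ s) :
    fourierCoefP (fun t => ∑ i ∈ s, a i * Complex.exp (2 * Real.pi * Complex.I * m i * t)) (m i)
      = a i := by
  rw [fourierCoefP_sum_exp]
  refine sum_eq_single_of_mem i (mem_filter.mpr ⟨hi, rfl⟩) fun j hj hji => ?_
  exact absurd (hm (mem_filter.mp hj).1 hi (mem_filter.mp hj).2) hji

theorem fourierCoefP_sum_exp_of_notMem_image (a : ι → ℂ) {n : ℤ} (hn : n ∉ s.image m) :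
    fourierCoefP (fun t => ∑ i ∈ s, a i * Complex.exp (2 * Real.pi * Complex.I * m i * t)) n
      = 0 := by
  rw [fourierCoefP_sum_exp, sum_eq_zero]
  intro i hi
  exact absurd (mem_image_of_mem m (mem_filter.mp hi).1) ((mem_filter.mp hi).2 ▸ hn)

theorem tsum_norm_fourierCoefP_sum_exp_rpow (a : ι → ℂ) (hm : Set.InjOn m s) {p : ℝ}
    (hp : p ≠ 0) :
    ∑' n : ℤ, ‖fourierCoefP
        (fun t => ∑ i ∈ s, a i * Complex.exp (2 * Real.pi * Complex.I * m i * t)) n‖ ^ p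
      = ∑ i ∈ s, ‖a i‖ ^ p := by
  rw [tsum_eq_sum (s := s.image m), sum_image hm]
  · exact sum_congr rfl fun i hi => by rw [fourierCoefP_sum_exp_apply_of_injOn a hm hi]
  · intro n hn
    rw [fourierCoefP_sum_exp_of_notMem_image a hn, norm_zero, Real.zero_rpow hp]

end FourierCoefficients

theorem Int.eq_zero_of_sum_mul_pow_eq_zero {b : ℤ} :
    ∀ {N : ℕ} (e : Fin N → ℤ), (∀ j, |e j| < b) → ∑ j, e j * b ^ (j : ℕ) = 0 → e = 0
  | 0, e, _, _ => Subsingleton.elim e 0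
  | N + 1, e, he, h => by
    have hsplit : ∑ j : Fin (N + 1), e j * b ^ (j : ℕ)
        = e 0 + b * ∑ j : Fin N, e j.succ * b ^ (j : ℕ) := by
      rw [Fin.sum_univ_succ, mul_sum]
      simp only [Fin.val_zero, pow_zero, mul_one, Fin.val_succ, pow_succ]
      congr 1
      exact sum_congr rfl fun j _ => by ring
    rw [hsplit] at h
    have he0 : e 0 = 0 :=
      Int.eq_zero_of_abs_lt_dvd ⟨-∑ j : Fin N, e j.succ * b ^ (j : ℕ), by linarith⟩ (he 0)
    have hb : b ≠ 0 := (lt_of_le_of_lt (abs_nonneg _) (he 0)).ne'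
    have htail : (fun j : Fin N => e j.succ) = 0 :=
      Int.eq_zero_of_sum_mul_pow_eq_zero _ (fun j => he j.succ)
        (by simpa [he0, hb] using h)
    funext j
    cases j using Fin.cases with
    | zero => exact he0
    | succ j => exact congr_fun htail j

theorem injOn_sum_mul_pow_piFinset_Icc {N : ℕ} (d : Fin N → ℕ) {ν : ℕ}
    (hν : ∀ j, 2 * d j < ν) :
    Set.InjOn (fun k : Fin N → ℤ => ∑ j, k j * (ν : ℤ) ^ (j : ℕ))
      (Fintype.piFinset fun j => Icc (-(d j : ℤ)) (d j)) := by
  intro k hk k' hk' hkk'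
  have hdigit : ∀ j, |(k - k') j| < ν := by
    intro j
    have h := mem_Icc.mp (Fintype.mem_piFinset.mp hk j)
    have h' := mem_Icc.mp (Fintype.mem_piFinset.mp hk' j)
    have := hν j
    rw [Pi.sub_apply, abs_lt]
    omega
  refine sub_eq_zero.mp (Int.eq_zero_of_sum_mul_pow_eq_zero _ hdigit ?_)
  simpa [sub_mul, sum_sub_distrib, sub_eq_zero] using hkk'

theorem prod_sum_exp_eq_sum_piFinset {ι : Type*} [Fintype ι] [DecidableEq ι]
    (S : ι → Finset ℤ) (c : ι → ℤ → ℂ) (w : ι → ℤ) (t : ℝ) :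
    ∏ j, ∑ k ∈ S j, c j k * Complex.exp (2 * Real.pi * Complex.I * k * (w j * t))
      = ∑ k ∈ Fintype.piFinset S, (∏ j, c j (k j)) *
          Complex.exp (2 * Real.pi * Complex.I * ↑(∑ j, k j * w j) * t) := by
  rw [prod_univ_sum]
  refine sum_congr rfl fun k _ => ?_
  rw [prod_mul_distrib, ← Complex.exp_sum, Int.cast_sum, mul_sum, sum_mul]
  push_cast
  congr 2
  exact sum_congr rfl fun j _ => by ring

/-- Riesz-product-type multiplicativity: if `P_j(t) = ∑_{|k| ≤ d_j} c_j(k) e^{2πikt}` are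
trigonometric polynomials with integer spectrum and `ν > 2 d_j` for all `j`, then
`P(t) = ∏_j P_j(ν^j t)` satisfies `P̂(0) = ∏_j P̂_j(0)` and
`‖P‖_{A^p(𝕋)} = ∏_j ‖P_j‖_{A^p(𝕋)}`. -/
theorem stmt7 (p : ℝ) (hp : 1 ≤ p) (N : ℕ) (d : Fin N → ℕ) (c : Fin N → ℤ → ℂ)
    (ν : ℕ) (hν : ∀ j, 2 * d j < ν)
    (P : ℝ → ℂ)
    (hP : ∀ t : ℝ, P t = ∏ j : Fin N, ∑ k ∈ Finset.Icc (-(d j : ℤ)) (d j),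
      c j k * Complex.exp (2 * (Real.pi : ℂ) * Complex.I * (k : ℂ)
        * ((ν : ℂ) ^ (j : ℕ) * (t : ℂ)))) :
    fourierCoefP P 0 = ∏ j : Fin N, c j 0 ∧
    (∑' n : ℤ, ‖fourierCoefP P n‖ ^ p) ^ (1/p)
      = ∏ j : Fin N, (∑ k ∈ Finset.Icc (-(d j : ℤ)) (d j), ‖c j k‖ ^ p) ^ (1/p) := by
  have hexpand : P = fun t : ℝ => ∑ k ∈ Fintype.piFinset fun j => Icc (-(d j : ℤ)) (d j),
      (∏ j, c j (k j)) *
        Complex.exp (2 * Real.pi * Complex.I * ↑(∑ j, k j * (ν : ℤ) ^ (j : ℕ)) * t) := by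
    funext t
    rw [hP, ← prod_sum_exp_eq_sum_piFinset]
    push_cast
    rfl
  have hinj := injOn_sum_mul_pow_piFinset_Icc d hν
  rw [hexpand]
  constructor
  · have hzero : (0 : Fin N → ℤ) ∈ Fintype.piFinset fun j => Icc (-(d j : ℤ)) (d j) :=
      Fintype.mem_piFinset.mpr fun j => by simp
    simpa using fourierCoefP_sum_exp_apply_of_injOn (fun k => ∏ j, c j (k j)) hinj hzero
  · rw [tsum_norm_fourierCoefP_sum_exp_rpow _ hinj (by positivity),
      Real.finsetProd_rpow _ _ (fun j _ => by positivity), prod_univ_sum]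
    congr 1
    exact sum_congr rfl fun k _ => by
      rw [norm_prod, Real.finsetProd_rpow _ _ (fun j _ => norm_nonneg _)]
end

section
/- Let p > 2. Then no system of translates of a single function can be an unconditional Schauder basis of L^p(R); more specifically (the fact quoted from prior work used in the paper): if {g(·−λ_n)} is a Schauder basis of L^p(R), 1 < p < ∞, then the sequence {λ_n} must be uniformly discrete, i.e., inf_{n≠m}|λ_n − λ_m| > 0. -/
/-!
If every vector of a Banach space `E` has a unique norm-convergent expansion along `G`, then the
sequences of partial sums of such expansions form a closed subspace of `ℓ^∞(E)`, on which taking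
the limit is a continuous linear bijection onto `E`. By the open mapping theorem its inverse is
bounded, i.e. every partial sum of the expansion of `f` has norm at most `K ‖f‖`. Applied to the
expansion `e_n - e_m` of `G n - G m` this gives `‖G n‖ ≤ K ‖G n - G m‖`.

For translates of a single `L^p` function all `‖G n‖` are equal and nonzero, while translation is
uniformly continuous on `L^p`, so translates by nearby shifts are close. Hence distinct shifts are
uniformly separated.
-/

open MeasureTheory Filter Topology Finset BoundedContinuousFunction

theorem BoundedContinuousFunction.isClosed_setOf_cauchySeq {α β : Type*} [TopologicalSpace α]
    [Nonempty α] [SemilatticeSup α] [PseudoMetricSpace β] :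
    IsClosed {s : α →ᵇ β | CauchySeq ⇑s} := by
  refine isClosed_of_closure_subset fun s hs => Metric.cauchySeq_iff'.2 fun ε hε => ?_
  obtain ⟨t, ht, hst⟩ := Metric.mem_closure_iff.1 hs (ε / 3) (by positivity)
  obtain ⟨N, hN⟩ := Metric.cauchySeq_iff'.1 ht (ε / 3) (by positivity)
  refine ⟨N, fun n hn => ?_⟩
  calc dist (s n) (s N) ≤ dist (s n) (t n) + dist (t n) (t N) + dist (t N) (s N) :=
        dist_triangle4 _ _ _ _
    _ < ε / 3 + ε / 3 + ε / 3 := by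
        gcongr
        · exact (dist_coe_le_dist n).trans_lt hst
        · exact hN n hn
        · rw [dist_comm]; exact (dist_coe_le_dist N).trans_lt hst
    _ = ε := by ring

section Expansion

variable {𝕜 E : Type*} [NontriviallyNormedField 𝕜] [NormedAddCommGroup E] [NormedSpace 𝕜 E]

variable (𝕜) in
def HasUniqueExpansion (G : ℕ → E) : Prop :=
  ∀ f : E, ∃! c : ℕ → 𝕜, Tendsto (fun N => ∑ n ∈ range N, c n • G n) atTop (𝓝 f)

theorem sum_range_single_one_smul (G : ℕ → E) (n N : ℕ) :
    ∑ k ∈ range N, (Pi.single n (1 : 𝕜) : ℕ → 𝕜) k • G k = if n < N then G n else 0 := by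
  simp [Pi.single_apply, ite_smul]

theorem HasUniqueExpansion.ne_zero {G : ℕ → E} (hG : HasUniqueExpansion 𝕜 G) (n : ℕ) :
    G n ≠ 0 := by
  intro hn
  have hsingle : Tendsto (fun N => ∑ k ∈ range N, (Pi.single n (1 : 𝕜) : ℕ → 𝕜) k • G k)
      atTop (𝓝 0) := by
    simp [sum_range_single_one_smul, hn]
  have hzero : Tendsto (fun N => ∑ k ∈ range N, (0 : ℕ → 𝕜) k • G k) atTop (𝓝 0) := by simp
  simpa using congrFun ((hG 0).unique hsingle hzero) n

/- The partial sums `N ↦ ∑ n < N, c n • G n` of convergent expansions, described without the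
coefficients `c` so that closedness in `ℓ^∞(E)` is evident. -/
variable (𝕜) in
def partialSumSpace (G : ℕ → E) : Submodule 𝕜 (ℕ →ᵇ E) where
  carrier := {s | s 0 = 0 ∧ (∀ N, s (N + 1) - s N ∈ 𝕜 ∙ G N) ∧ CauchySeq ⇑s}
  add_mem' := by
    rintro s t ⟨hs0, hs, hsC⟩ ⟨ht0, ht, htC⟩
    refine ⟨by simp [hs0, ht0], fun N => ?_, hsC.add htC⟩
    simpa [add_sub_add_comm] using Submodule.add_mem _ (hs N) (ht N)
  zero_mem' := ⟨rfl, fun N => by simp, cauchySeq_const 0⟩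
  smul_mem' := by
    rintro a s ⟨hs0, hs, hsC⟩
    refine ⟨by simp [hs0], fun N => ?_, (uniformContinuous_const_smul a).comp_cauchySeq hsC⟩
    simpa [smul_sub] using Submodule.smul_mem _ a (hs N)

theorem isClosed_partialSumSpace [CompleteSpace 𝕜] (G : ℕ → E) :
    IsClosed (partialSumSpace 𝕜 G : Set (ℕ →ᵇ E)) := by
  have hset : (partialSumSpace 𝕜 G : Set (ℕ →ᵇ E)) = {s | s 0 = 0} ∩
      ((⋂ N, {s | s (N + 1) - s N ∈ 𝕜 ∙ G N}) ∩ {s : ℕ →ᵇ E | CauchySeq ⇑s}) := by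
    ext s; simp [partialSumSpace]
  rw [hset]
  refine (isClosed_eq (continuous_eval_const 0) continuous_const).inter
    ((isClosed_iInter fun N => ?_).inter isClosed_setOf_cauchySeq)
  exact (Submodule.closed_of_finiteDimensional _).preimage
    ((continuous_eval_const (N + 1)).sub (continuous_eval_const N))

theorem exists_eq_partialSum_of_mem_partialSumSpace {G : ℕ → E} {s : ℕ →ᵇ E}
    (hs : s ∈ partialSumSpace 𝕜 G) : ∃ c : ℕ → 𝕜, ∀ N, s N = ∑ n ∈ range N, c n • G n := by
  choose c hc using fun N => Submodule.mem_span_singleton.1 (hs.2.1 N)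
  exact ⟨c, fun N => by simp only [hc, sum_range_sub, hs.1, sub_zero]⟩

theorem exists_mem_partialSumSpace_of_tendsto {G : ℕ → E} {c : ℕ → 𝕜} {f : E}
    (hf : Tendsto (fun N => ∑ n ∈ range N, c n • G n) atTop (𝓝 f)) :
    ∃ s ∈ partialSumSpace 𝕜 G, ⇑s = fun N => ∑ n ∈ range N, c n • G n := by
  obtain ⟨C, hC⟩ := hf.norm.bddAbove_range
  refine ⟨.ofNormedAddCommGroupDiscrete _ C fun N => hC ⟨N, rfl⟩,
    ⟨by simp, fun N => ?_, hf.cauchySeq⟩, rfl⟩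
  simpa [sum_range_succ] using Submodule.smul_mem _ (c N) (Submodule.mem_span_singleton_self (G N))

variable [CompleteSpace E]

theorem tendsto_limUnder_of_mem_partialSumSpace {G : ℕ → E} {s : ℕ →ᵇ E}
    (hs : s ∈ partialSumSpace 𝕜 G) : Tendsto ⇑s atTop (𝓝 (limUnder atTop ⇑s)) :=
  tendsto_nhds_limUnder (cauchySeq_tendsto_of_complete hs.2.2)

variable (𝕜) in
noncomputable def partialSumLimit (G : ℕ → E) : partialSumSpace 𝕜 G →L[𝕜] E :=
  LinearMap.mkContinuous
    { toFun := fun s => limUnder atTop ⇑(s : ℕ →ᵇ E)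
      map_add' := fun s t =>
        ((tendsto_limUnder_of_mem_partialSumSpace s.2).add
          (tendsto_limUnder_of_mem_partialSumSpace t.2)).limUnder_eq
      map_smul' := fun a s =>
        ((tendsto_limUnder_of_mem_partialSumSpace s.2).const_smul a).limUnder_eq }
    1 fun s => by
      rw [one_mul]
      exact le_of_tendsto' (tendsto_limUnder_of_mem_partialSumSpace s.2).norm
        fun N => norm_coe_le_norm (s : ℕ →ᵇ E) N

theorem tendsto_partialSumLimit (G : ℕ → E) (s : partialSumSpace 𝕜 G) :
    Tendsto ⇑(s : ℕ →ᵇ E) atTop (𝓝 (partialSumLimit 𝕜 G s)) :=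
  tendsto_limUnder_of_mem_partialSumSpace s.2

theorem HasUniqueExpansion.bijective_partialSumLimit {G : ℕ → E} (hG : HasUniqueExpansion 𝕜 G) :
    Function.Bijective (partialSumLimit 𝕜 G) := by
  refine ⟨(injective_iff_map_eq_zero _).2 fun s hs => ?_, fun f => ?_⟩
  · obtain ⟨c, hc⟩ := exists_eq_partialSum_of_mem_partialSumSpace s.2
    have hc0 : Tendsto (fun N => ∑ n ∈ range N, c n • G n) atTop (𝓝 0) := by
      simpa [← funext hc, hs] using tendsto_partialSumLimit G s
    have hzero : Tendsto (fun N => ∑ n ∈ range N, (0 : ℕ → 𝕜) n • G n) atTop (𝓝 0) := by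
      simp
    obtain rfl := (hG 0).unique hc0 hzero
    ext N
    simp [hc]
  · obtain ⟨c, hc, -⟩ := hG f
    obtain ⟨s, hs, hsc⟩ := exists_mem_partialSumSpace_of_tendsto hc
    exact ⟨⟨s, hs⟩, tendsto_nhds_unique (tendsto_partialSumLimit G ⟨s, hs⟩) (hsc ▸ hc)⟩

theorem HasUniqueExpansion.exists_norm_partialSum_le [CompleteSpace 𝕜] {G : ℕ → E}
    (hG : HasUniqueExpansion 𝕜 G) :
    ∃ K : ℝ, ∀ (c : ℕ → 𝕜) (f : E),
      Tendsto (fun N => ∑ n ∈ range N, c n • G n) atTop (𝓝 f) →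
      ∀ N, ‖∑ n ∈ range N, c n • G n‖ ≤ K * ‖f‖ := by
  have : CompleteSpace (partialSumSpace 𝕜 G) := (isClosed_partialSumSpace G).completeSpace_coe
  obtain ⟨hinj, hsurj⟩ := hG.bijective_partialSumLimit
  obtain ⟨K, hK⟩ := (partialSumLimit 𝕜 G).antilipschitz_of_injective_of_isClosed_range hinj
    (hsurj.range_eq ▸ isClosed_univ)
  refine ⟨K, fun c f hf N => ?_⟩
  obtain ⟨s, hs, hsc⟩ := exists_mem_partialSumSpace_of_tendsto hf
  have hlim : partialSumLimit 𝕜 G ⟨s, hs⟩ = f :=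
    tendsto_nhds_unique (tendsto_partialSumLimit G ⟨s, hs⟩) (hsc ▸ hf)
  calc ‖∑ n ∈ range N, c n • G n‖ = ‖s N‖ := by rw [hsc]
    _ ≤ ‖(⟨s, hs⟩ : partialSumSpace 𝕜 G)‖ := norm_coe_le_norm s N
    _ ≤ K * ‖f‖ := hlim ▸ hK.le_mul_norm (map_zero _) _

theorem HasUniqueExpansion.exists_pos_le_norm_sub [CompleteSpace 𝕜] {G : ℕ → E}
    (hG : HasUniqueExpansion 𝕜 G) (hnorm : ∀ n, ‖G n‖ = ‖G 0‖) :
    ∃ ε > 0, ∀ n m, n ≠ m → ε ≤ ‖G n - G m‖ := by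
  obtain ⟨K, hK⟩ := hG.exists_norm_partialSum_le
  have hG0 : 0 < ‖G 0‖ := norm_pos_iff.2 (hG.ne_zero 0)
  -- the `(n + 1)`-st partial sum of the expansion `e_n - e_m` of `G n - G m` is `G n`
  have hlt : ∀ n m, n < m → ‖G 0‖ ≤ K * ‖G n - G m‖ := by
    intro n m hnm
    have hexp : Tendsto (fun N => ∑ k ∈ range N,
        (Pi.single n (1 : 𝕜) - Pi.single m (1 : 𝕜) : ℕ → 𝕜) k • G k) atTop (𝓝 (G n - G m)) := by
      refine tendsto_atTop_of_eventually_const (i₀ := m + 1) fun N hN => ?_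
      simp [sub_smul, sum_sub_distrib, sum_range_single_one_smul, show n < N by omega,
        show m < N by omega]
    simpa [sub_smul, sum_sub_distrib, sum_range_single_one_smul, hnorm n,
      show ¬m ≤ n by omega] using hK _ _ hexp (n + 1)
  have hK0 : 0 < K := pos_of_mul_pos_left (hG0.trans_le (hlt 0 1 one_pos)) (norm_nonneg _)
  refine ⟨‖G 0‖ / K, div_pos hG0 hK0, fun n m hnm => ?_⟩
  rw [div_le_iff₀' hK0]
  rcases hnm.lt_or_gt with h | h
  · exact hlt n m h
  · rw [norm_sub_rev]; exact hlt m n h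

end Expansion

section Translation

variable {X E : Type*} [NormedAddCommGroup X] [MeasurableSpace X] [BorelSpace X]
  {μ : Measure X} [μ.IsAddRightInvariant] [NormedAddCommGroup E] {p : ENNReal}

variable (μ) in
noncomputable def translateRight (t : X) : Lp E p μ →+ Lp E p μ :=
  Lp.compMeasurePreserving (· + t) (measurePreserving_add_right μ t)

theorem norm_translateRight (t : X) (F : Lp E p μ) : ‖translateRight μ t F‖ = ‖F‖ :=
  Lp.norm_compMeasurePreserving F _

theorem translateRight_zero (F : Lp E p μ) : translateRight μ 0 F = F := by
  simp only [translateRight, add_zero]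
  exact Lp.compMeasurePreserving_id_apply F

theorem translateRight_translateRight (s t : X) (F : Lp E p μ) :
    translateRight μ s (translateRight μ t F) = translateRight μ (t + s) F := by
  simp only [translateRight, ← Lp.compMeasurePreserving_comp_apply]
  congr 2
  funext x
  simp [add_assoc, add_comm s t]

theorem translateRight_eq_of_ae_eq (t : X) {f : X → E} {F F' : Lp E p μ} (hF : F =ᵐ[μ] f)
    (hF' : F' =ᵐ[μ] fun x => f (x + t)) : translateRight μ t F = F' :=
  Lp.ext <| ((Lp.coeFn_compMeasurePreserving F _).trans
    ((measurePreserving_add_right μ t).quasiMeasurePreserving.ae_eq_comp hF)).trans hF'.symm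

variable [Fact (1 ≤ p)]

theorem dist_translateRight (a b : X) (F : Lp E p μ) :
    dist (translateRight μ a F) (translateRight μ b F) = dist (translateRight μ (a - b) F) F := by
  calc dist (translateRight μ a F) (translateRight μ b F)
      = dist (translateRight μ b (translateRight μ (a - b) F)) (translateRight μ b F) := by
        rw [translateRight_translateRight, sub_add_cancel]
    _ = dist (translateRight μ (a - b) F) F := (Lp.isometry_compMeasurePreserving _).dist_eq _ _

variable [μ.InnerRegularCompactLTTop] [IsLocallyFiniteMeasure μ]

theorem continuous_translateRight (hp : p ≠ ⊤) (F : Lp E p μ) :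
    Continuous fun t => translateRight μ t F :=
  Continuous.compMeasurePreservingLp (g := ContinuousMap.addRight) continuous_const
    (ContinuousMap.continuous_of_continuous_uncurry _ (continuous_snd.add continuous_fst))
    (measurePreserving_add_right μ) hp

theorem uniformContinuous_translateRight (hp : p ≠ ⊤) (F : Lp E p μ) :
    UniformContinuous fun t => translateRight μ t F := by
  refine Metric.uniformContinuous_iff.2 fun ε hε => ?_
  obtain ⟨δ, hδ, hclose⟩ := Metric.continuousAt_iff.1
    ((continuous_translateRight hp F).continuousAt (x := 0)) ε hε
  refine ⟨δ, hδ, fun {a b} hab => ?_⟩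
  have h := hclose (x := a - b) (by rwa [dist_zero_right, ← dist_eq_norm])
  rwa [translateRight_zero, ← dist_translateRight] at h

end Translation

theorem stmt18_general (p : ℝ) [Fact (1 ≤ ENNReal.ofReal p)]
    (g : ℝ → ℝ) (lam : ℕ → ℝ)
    (G : ℕ → Lp ℝ (ENNReal.ofReal p) (volume : Measure ℝ))
    (hG : ∀ n, (G n : ℝ → ℝ) =ᵐ[volume] fun x => g (x - lam n))
    (hbasis : ∀ f : Lp ℝ (ENNReal.ofReal p) (volume : Measure ℝ),
      ∃! c : ℕ → ℝ,
        Tendsto (fun N => ∑ n ∈ Finset.range N, c n • G n) atTop (nhds f)) :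
    ∃ δ > 0, ∀ n m : ℕ, n ≠ m → δ ≤ |lam n - lam m| := by
  have hGn : ∀ n, translateRight volume (lam 0 - lam n) (G 0) = G n := fun n =>
    translateRight_eq_of_ae_eq _ (hG 0) <| (hG n).trans <| .of_eq <| funext fun x => by ring_nf
  obtain ⟨ε, hε, hsep⟩ := HasUniqueExpansion.exists_pos_le_norm_sub (𝕜 := ℝ) hbasis fun n => by
    rw [← hGn n, norm_translateRight]
  obtain ⟨δ, hδ, hclose⟩ := Metric.uniformContinuous_iff.1
    (uniformContinuous_translateRight ENNReal.ofReal_ne_top (G 0)) ε hε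
  refine ⟨δ, hδ, fun n m hnm => not_lt.1 fun h => (hsep n m hnm).not_gt ?_⟩
  rw [← dist_eq_norm, ← hGn n, ← hGn m]
  exact hclose (by rwa [Real.dist_eq, sub_sub_sub_cancel_left, abs_sub_comm])

/-- (Olson–Zalik) If a system of translates `{g(·-λ_n)}` is a Schauder basis of `L^p(ℝ)`,
`1 < p < ∞` (i.e. every `f` has a unique norm-convergent expansion
`f = ∑_n c_n g(·-λ_n)`), then the sequence `{λ_n}` is uniformly discrete:
`inf_{n ≠ m} |λ_n - λ_m| > 0`.  (In particular no system of translates is an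
unconditional Schauder basis of `L^p(ℝ)` for `p > 2`.) -/
theorem stmt18 (p : ℝ) (hp1 : 1 < p) [Fact (1 ≤ ENNReal.ofReal p)]
    (g : ℝ → ℝ) (lam : ℕ → ℝ)
    (G : ℕ → Lp ℝ (ENNReal.ofReal p) (volume : Measure ℝ))
    (hG : ∀ n, (G n : ℝ → ℝ) =ᵐ[volume] fun x => g (x - lam n))
    (hbasis : ∀ f : Lp ℝ (ENNReal.ofReal p) (volume : Measure ℝ),
      ∃! c : ℕ → ℝ,
        Tendsto (fun N => ∑ n ∈ Finset.range N, c n • G n) atTop (nhds f)) :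
    ∃ δ > 0, ∀ n m : ℕ, n ≠ m → δ ≤ |lam n - lam m| :=
  stmt18_general p g lam G hG hbasis
end
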